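/- arXiv:1302.1441 — 3 statements merged into one kernel-verified Lean document; each statement's English description precedes it below -/
import Mathlib

section
/- The polynomial p(x,y) = x^21 + 21x^19y + 189x^17y^2 + 952x^15y^3 + 2940x^13y^4 + 5733x^11y^5 + 7007x^9y^6 + 5148x^7y^7 + 2079x^5y^8 + 385x^3y^9 + 21xy^10 + y^21 has exactly 12 nonzero monomials and degree 21, so it attains equality in the bound d = 2N - 3 where N is the number of nonzero coefficients. -/
open MvPolynomial

noncomputable def p1 : MvPolynomial (Fin 2) ℝ :=
  X 0 ^ 21 + 21 * X 0 ^ 19 * X 1 + 189 * X 0 ^ 17 * X 1 ^ 2 + 952 * X 0 ^ 15 * X 1 ^ 3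
    + 2940 * X 0 ^ 13 * X 1 ^ 4 + 5733 * X 0 ^ 11 * X 1 ^ 5 + 7007 * X 0 ^ 9 * X 1 ^ 6
    + 5148 * X 0 ^ 7 * X 1 ^ 7 + 2079 * X 0 ^ 5 * X 1 ^ 8 + 385 * X 0 ^ 3 * X 1 ^ 9
    + 21 * X 0 * X 1 ^ 10 + X 1 ^ 21

noncomputable def e (a b : ℕ) : Fin 2 →₀ ℕ := Finsupp.single 0 a + Finsupp.single 1 b

lemma e_ne {a b a' b' : ℕ} (h : a ≠ a') : e a b ≠ e a' b' := by
  intro hh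
  apply h
  have := DFunLike.congr_fun hh (0 : Fin 2)
  simpa [e, Finsupp.single_apply] using this

lemma e_sum (a b : ℕ) : ((e a b).sum fun _ n => n) = a + b := by
  simp [e, Finsupp.sum_add_index, Finsupp.sum_single_index]

lemma mono_eq (a b : ℕ) (c : ℝ) :
    (monomial (e a b) c : MvPolynomial (Fin 2) ℝ) = C c * X 0 ^ a * X 1 ^ b := by
  rw [e, monomial_single_add]
  rw [show (Finsupp.single (1:Fin 2) b) = Finsupp.single 1 b + 0 by simp, monomial_single_add]
  simp [monomial_zero']
  ring

lemma coeff_mono_ne {a b a' b' : ℕ} (c : ℝ) (h : a' ≠ a) :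
    coeff (e a b) (monomial (e a' b') c : MvPolynomial (Fin 2) ℝ) = 0 := by
  rw [coeff_monomial, if_neg (e_ne h)]

lemma aux (a b : ℕ) (c : ℝ) (hc : c ≠ 0) (q : MvPolynomial (Fin 2) ℝ) (h : coeff (e a b) q = 0) :
    ((monomial (e a b) c : MvPolynomial (Fin 2) ℝ) + q).support = insert (e a b) q.support := by
  classical
  ext m
  simp only [mem_support_iff, coeff_add, coeff_monomial, Finset.mem_insert]
  by_cases hm : e a b = m
  · subst hm; simp [hc, h]
  · rw [if_neg hm, zero_add]
    constructor
    · exact Or.inr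
    · rintro (rfl | hh)
      · exact absurd rfl hm
      · exact hh

lemma p1_eq : p1 = monomial (e 21 0) 1 + (monomial (e 19 1) 21 + (monomial (e 17 2) 189
    + (monomial (e 15 3) 952 + (monomial (e 13 4) 2940 + (monomial (e 11 5) 5733
    + (monomial (e 9 6) 7007 + (monomial (e 7 7) 5148 + (monomial (e 5 8) 2079
    + (monomial (e 3 9) 385 + (monomial (e 1 10) 21 + monomial (e 0 21) 1)))))))))) := by
  simp only [mono_eq, map_ofNat, map_one, p1]
  ring

lemma support_p1 : p1.support = {e 21 0, e 19 1, e 17 2, e 15 3, e 13 4, e 11 5, e 9 6,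
    e 7 7, e 5 8, e 3 9, e 1 10, e 0 21} := by
  rw [p1_eq]
  rw [aux, aux, aux, aux, aux, aux, aux, aux, aux, aux, aux, support_monomial,
    if_neg (one_ne_zero)]
  all_goals simp [e_ne]

theorem stmt_1 : p1.support.card = 12 ∧ p1.totalDegree = 21 ∧ p1.totalDegree = 2 * p1.support.card - 3 := by
  have hcard : p1.support.card = 12 := by
    rw [support_p1]
    repeat rw [Finset.card_insert_of_notMem (by simp [e_ne])]
    rfl
  have hdeg : p1.totalDegree = 21 := by
    rw [totalDegree, support_p1]
    simp [Finset.sup_insert, e_sum]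
  exact ⟨hcard, hdeg, by rw [hcard, hdeg]⟩
end

section
/- For every odd positive integer d, there exists a polynomial p(x,y) with nonnegative real coefficients, of total degree d, with exactly (d+3)/2 nonzero monomials, such that p(x,y) = 1 whenever x + y = 1. -/
open MvPolynomial

noncomputable def gp : ℕ → MvPolynomial (Fin 2) ℝ
  | 0 => C 2
  | 1 => X 0
  | (n+2) => X 0 * gp (n+1) + X 1 * gp n

lemma gp_succ_succ (n : ℕ) : gp (n+2) = X 0 * gp (n+1) + X 1 * gp n := rfl

noncomputable def mk2 (a b : ℕ) : Fin 2 →₀ ℕ := Finsupp.single 0 a + Finsupp.single 1 b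

lemma mk2_apply0 (a b : ℕ) : mk2 a b 0 = a := by
  simp [mk2, Finsupp.single_apply]

lemma mk2_apply1 (a b : ℕ) : mk2 a b 1 = b := by
  simp [mk2, Finsupp.single_apply]

lemma eq_mk2 (m : Fin 2 →₀ ℕ) : m = mk2 (m 0) (m 1) := by
  ext i
  fin_cases i <;> simp [mk2, Finsupp.single_apply]

lemma mk2_degree (a b : ℕ) : ((mk2 a b).sum fun _ e => e) = a + b := by
  classical
  rw [mk2, Finsupp.sum_add_index (by simp) (by simp)]
  simp [Finsupp.sum_single_index]

lemma gp_eval : ∀ n : ℕ, ∀ x : ℝ, eval ![x, 1-x] (gp n) = 1 + (x-1)^n := by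
  have H : ∀ n : ℕ, (∀ x : ℝ, eval ![x, 1-x] (gp n) = 1 + (x-1)^n) ∧
      (∀ x : ℝ, eval ![x, 1-x] (gp (n+1)) = 1 + (x-1)^(n+1)) := by
    intro n
    induction n with
    | zero =>
      constructor <;> intro x <;> simp [gp] <;> ring
    | succ n ih =>
      refine ⟨ih.2, ?_⟩
      intro x
      rw [gp_succ_succ, map_add, map_mul, map_mul, eval_X, eval_X, ih.1 x, ih.2 x]
      simp only [Matrix.cons_val_zero, Matrix.cons_val_one, Matrix.head_cons]
      ring
  exact fun n => (H n).1

lemma gp_nonneg : ∀ n : ℕ, ∀ m, 0 ≤ coeff m (gp n) := by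
  classical
  have H : ∀ n : ℕ, (∀ m, 0 ≤ coeff m (gp n)) ∧ (∀ m, 0 ≤ coeff m (gp (n+1))) := by
    intro n
    induction n with
    | zero =>
      constructor <;> intro m
      · rw [show gp 0 = C 2 from rfl, coeff_C]
        split <;> norm_num
      · rw [show gp 1 = X 0 from rfl, coeff_X']
        split <;> norm_num
    | succ n ih =>
      refine ⟨ih.2, ?_⟩
      intro m
      rw [gp_succ_succ, coeff_add, coeff_X_mul', coeff_X_mul']
      have h1 := ih.1
      have h2 := ih.2
      apply add_nonneg <;> split <;> first | apply h1 | apply h2 | exact le_rfl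
  exact fun n => (H n).1

lemma gp_coeff_zero : ∀ n : ℕ, ∀ m : Fin 2 →₀ ℕ, m 0 + 2 * m 1 ≠ n → coeff m (gp n) = 0 := by
  classical
  have H : ∀ n : ℕ,
      (∀ m : Fin 2 →₀ ℕ, m 0 + 2 * m 1 ≠ n → coeff m (gp n) = 0) ∧
      (∀ m : Fin 2 →₀ ℕ, m 0 + 2 * m 1 ≠ n + 1 → coeff m (gp (n+1)) = 0) := by
    intro n
    induction n with
    | zero =>
      constructor <;> intro m hm
      · rw [show gp 0 = C 2 from rfl, coeff_C, if_neg]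
        intro h
        apply hm
        rw [← h]
        simp
      · rw [show gp 1 = X 0 from rfl, coeff_X', if_neg]
        intro h
        apply hm
        rw [← h]
        simp [Finsupp.single_apply]
    | succ n ih =>
      refine ⟨ih.2, ?_⟩
      intro m hm
      rw [gp_succ_succ, coeff_add, coeff_X_mul', coeff_X_mul']
      have t1 : (if (0:Fin 2) ∈ m.support then coeff (m - Finsupp.single 0 1) (gp (n+1)) else 0) = 0 := by
        split
        · next h =>
          have hm0 : m 0 ≠ 0 := Finsupp.mem_support_iff.mp h
          apply ih.2
          simp only [Finsupp.tsub_apply, Finsupp.single_apply]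
          norm_num
          omega
        · rfl
      have t2 : (if (1:Fin 2) ∈ m.support then coeff (m - Finsupp.single 1 1) (gp n) else 0) = 0 := by
        split
        · next h =>
          have hm1 : m 1 ≠ 0 := Finsupp.mem_support_iff.mp h
          apply ih.1
          simp only [Finsupp.tsub_apply, Finsupp.single_apply]
          norm_num
          omega
        · rfl
      rw [t1, t2, add_zero]
  exact fun n => (H n).1

lemma mk2_X0_split (a b : ℕ) : mk2 (a+1) b = Finsupp.single 0 1 + mk2 a b := by
  ext i
  fin_cases i <;> simp [mk2, Finsupp.single_apply] <;> omega

lemma mk2_X1_split (a b : ℕ) : mk2 a (b+1) = Finsupp.single 1 1 + mk2 a b := by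
  ext i
  fin_cases i <;> simp [mk2, Finsupp.single_apply] <;> omega

lemma gp_coeff_pos : ∀ n : ℕ, ∀ b : ℕ, 2 * b ≤ n → 0 < coeff (mk2 (n - 2*b) b) (gp n) := by
  classical
  have H : ∀ n : ℕ,
      (∀ b : ℕ, 2 * b ≤ n → 0 < coeff (mk2 (n - 2*b) b) (gp n)) ∧
      (∀ b : ℕ, 2 * b ≤ n + 1 → 0 < coeff (mk2 (n + 1 - 2*b) b) (gp (n+1))) := by
    intro n
    induction n with
    | zero =>
      constructor <;> intro b hb
      · obtain rfl : b = 0 := by omega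
        have h0 : mk2 (0 - 2*0) 0 = 0 := by simp [mk2]
        rw [show gp 0 = C 2 from rfl, h0, coeff_C]
        norm_num
      · obtain rfl : b = 0 := by omega
        have h0 : mk2 (0 + 1 - 2*0) 0 = Finsupp.single 0 1 := by simp [mk2]
        rw [show gp 1 = X 0 from rfl, h0, coeff_X]
        norm_num
    | succ n ih =>
      refine ⟨ih.2, ?_⟩
      intro b hb
      show 0 < coeff (mk2 (n + 2 - 2*b) b) (gp (n+2))
      rw [gp_succ_succ, coeff_add]
      have hn1 : 0 ≤ coeff (mk2 (n + 2 - 2*b) b) (X 0 * gp (n+1)) := by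
        rw [coeff_X_mul']
        split
        · apply gp_nonneg
        · exact le_rfl
      have hn2 : 0 ≤ coeff (mk2 (n + 2 - 2*b) b) (X 1 * gp n) := by
        rw [coeff_X_mul']
        split
        · apply gp_nonneg
        · exact le_rfl
      by_cases hcase : 2 * b ≤ n + 1
      · have hsplit : mk2 (n + 2 - 2*b) b = Finsupp.single 0 1 + mk2 (n + 1 - 2*b) b := by
          have h : n + 2 - 2*b = (n + 1 - 2*b) + 1 := by omega
          rw [h, mk2_X0_split]
        have hpos : 0 < coeff (mk2 (n + 2 - 2*b) b) (X 0 * gp (n+1)) := by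
          rw [hsplit, coeff_X_mul]
          exact ih.2 b hcase
        exact add_pos_of_pos_of_nonneg hpos hn2
      · obtain ⟨b', rfl⟩ : ∃ b', b = b' + 1 := ⟨b - 1, by omega⟩
        have hb' : 2 * b' ≤ n := by omega
        have ha : n + 2 - 2*(b'+1) = n - 2*b' := by omega
        have hsplit : mk2 (n + 2 - 2*(b'+1)) (b'+1) = Finsupp.single 1 1 + mk2 (n - 2*b') b' := by
          rw [ha, mk2_X1_split]
        have hpos : 0 < coeff (mk2 (n + 2 - 2*(b'+1)) (b'+1)) (X 1 * gp n) := by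
          rw [hsplit, coeff_X_mul]
          exact ih.1 b' hb'
        exact add_pos_of_nonneg_of_pos hn1 hpos
  exact fun n => (H n).1

lemma gp_support (n : ℕ) :
    (gp n).support = (Finset.range (n/2 + 1)).image (fun b => mk2 (n - 2*b) b) := by
  classical
  ext m
  simp only [mem_support_iff, Finset.mem_image, Finset.mem_range]
  constructor
  · intro h
    by_cases hc : m 0 + 2 * m 1 = n
    · refine ⟨m 1, by omega, ?_⟩
      have h2 : n - 2 * (m 1) = m 0 := by omega
      rw [h2, ← eq_mk2]
    · exact absurd (gp_coeff_zero n m hc) h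
  · rintro ⟨b, hb, rfl⟩
    exact (gp_coeff_pos n b (by omega)).ne'

lemma p_support (d : ℕ) (hpos : 0 < d) (hodd : Odd d) :
    (gp d + X 1 ^ d).support =
      insert (Finsupp.single 1 d)
        ((Finset.range (d/2 + 1)).image (fun b => mk2 (d - 2*b) b)) := by
  classical
  ext m
  simp only [mem_support_iff, coeff_add, coeff_X_pow, Finset.mem_insert]
  constructor
  · intro h
    by_cases hm : Finsupp.single 1 d = m
    · exact Or.inl hm.symm
    · right
      rw [if_neg hm, add_zero] at h
      have h2 := (gp_support d) ▸ mem_support_iff.mpr h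
      simpa [Finset.mem_image, Finset.mem_range] using h2
  · rintro (rfl | hm)
    · have hz : coeff (Finsupp.single 1 d) (gp d) = 0 := by
        apply gp_coeff_zero
        simp only [Finsupp.single_apply]
        norm_num
        omega
      rw [hz, if_pos rfl]
      norm_num
    · simp only [Finset.mem_image, Finset.mem_range] at hm
      obtain ⟨b, hb, rfl⟩ := hm
      have h1 : 0 < coeff (mk2 (d - 2*b) b) (gp d) := gp_coeff_pos d b (by omega)
      have h2 : (0:ℝ) ≤ if Finsupp.single 1 d = mk2 (d - 2*b) b then 1 else 0 := by
        split <;> norm_num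
      exact (add_pos_of_pos_of_nonneg h1 h2).ne'

theorem stmt_10 : ∀ d : ℕ, Odd d → 0 < d →
    ∃ p : MvPolynomial (Fin 2) ℝ,
      (∀ m, 0 ≤ p.coeff m) ∧
      p.totalDegree = d ∧
      p.support.card = (d + 3) / 2 ∧
      (∀ x y : ℝ, x + y = 1 → eval ![x, y] p = 1) := by
  classical
  intro d hodd hpos
  refine ⟨gp d + X 1 ^ d, ?_, ?_, ?_, ?_⟩
  · -- nonneg coefficients
    intro m
    rw [coeff_add, coeff_X_pow]
    apply add_nonneg (gp_nonneg d m)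
    split <;> norm_num
  · -- total degree
    apply le_antisymm
    · apply Finset.sup_le
      intro s hs
      rw [p_support d hpos hodd, Finset.mem_insert] at hs
      rcases hs with rfl | hs
      · rw [Finsupp.sum_single_index]
        rfl
      · simp only [Finset.mem_image, Finset.mem_range] at hs
        obtain ⟨b, hb, rfl⟩ := hs
        rw [mk2_degree]
        omega
    · have hmem : Finsupp.single 1 d ∈ (gp d + X 1 ^ d).support := by
        rw [p_support d hpos hodd]
        exact Finset.mem_insert_self _ _
      have := le_totalDegree hmem
      rwa [Finsupp.sum_single_index rfl] at this
  · -- support card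
    rw [p_support d hpos hodd]
    have hnotmem : Finsupp.single 1 d ∉
        (Finset.range (d/2 + 1)).image (fun b => mk2 (d - 2*b) b) := by
      simp only [Finset.mem_image, Finset.mem_range]
      rintro ⟨b, hb, hbe⟩
      have := congrArg (fun f => f 1) hbe
      simp only [mk2_apply1, Finsupp.single_apply] at this
      norm_num at this
      omega
    rw [Finset.card_insert_of_notMem hnotmem,
      Finset.card_image_of_injOn, Finset.card_range]
    · obtain ⟨c, hc⟩ := hodd
      omega
    · intro i _ j _ hij
      have := congrArg (fun f => f 1) hij
      simpa [mk2_apply1] using this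
  · -- evaluation
    intro x y hxy
    have hy : y = 1 - x := by linarith
    subst hy
    rw [map_add, map_pow, eval_X, gp_eval d x]
    simp only [Matrix.cons_val_one, Matrix.head_cons, Matrix.cons_val_zero]
    have h : (x - 1)^d = -((1-x)^d) := by
      rw [show x - 1 = -(1-x) by ring, hodd.neg_pow]
    rw [h]
    ring
end

section
/- If p(x,y) is a polynomial with nonnegative coefficients satisfying p(x, 1-x) = 1 identically, and p has at most 2 nonzero monomials, then the total degree of p is at most 1. -/
open MvPolynomial

lemma half_pow (a b : ℕ) (ha : 1 ≤ a) (hb : 1 ≤ b)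
    (h : (1/2:ℝ)^a + (1/2:ℝ)^b = 1) : a = 1 ∧ b = 1 := by
  constructor
  · by_contra hc
    have ha2 : 2 ≤ a := by omega
    have h1 : (1/2:ℝ)^a ≤ (1/2:ℝ)^2 :=
      pow_le_pow_of_le_one (by norm_num) (by norm_num) ha2
    have h2 : (1/2:ℝ)^b ≤ (1/2:ℝ)^1 :=
      pow_le_pow_of_le_one (by norm_num) (by norm_num) hb
    norm_num at h1 h2; linarith
  · by_contra hc
    have hb2 : 2 ≤ b := by omega
    have h1 : (1/2:ℝ)^b ≤ (1/2:ℝ)^2 :=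
      pow_le_pow_of_le_one (by norm_num) (by norm_num) hb2
    have h2 : (1/2:ℝ)^a ≤ (1/2:ℝ)^1 :=
      pow_le_pow_of_le_one (by norm_num) (by norm_num) ha
    norm_num at h1 h2; linarith

lemma aux1 (a1 a2 b2 : ℕ) (c1 c2 : ℝ) (hc1 : 0 < c1) (hc2 : 0 < c2)
    (E1 : c1 + c2 * (0:ℝ)^b2 = 1)
    (E0 : c1 * (0:ℝ)^a1 + c2 * (0:ℝ)^a2 = 1)
    (Eh : c1 * (1/2:ℝ)^a1 + c2 * (1/2:ℝ)^(a2+b2) = 1) :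
    a1 ≤ 1 ∧ a2 + b2 ≤ 1 := by
  rcases Nat.eq_zero_or_pos a1 with h1 | h1
  · subst h1
    simp only [pow_zero, mul_one] at E0 Eh
    rcases Nat.eq_zero_or_pos b2 with h2 | h2
    · subst h2
      simp only [pow_zero, mul_one, Nat.add_zero] at E1 Eh
      rcases Nat.eq_zero_or_pos a2 with h3 | h3
      · simp [h3]
      · exfalso
        have hp : (1/2:ℝ)^a2 < 1 := pow_lt_one₀ (by norm_num) (by norm_num) h3.ne'
        nlinarith
    · exfalso
      rw [zero_pow h2.ne'] at E1
      have hp : (0:ℝ) < (1/2:ℝ)^(a2+b2) := pow_pos (by norm_num) _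
      nlinarith
  · rw [zero_pow h1.ne'] at E0
    rcases Nat.eq_zero_or_pos a2 with h3 | h3
    · subst h3
      simp only [pow_zero, mul_one, mul_zero, zero_add, Nat.zero_add] at E0 Eh
      subst E0
      rcases Nat.eq_zero_or_pos b2 with h2 | h2
      · exfalso; rw [h2] at E1; norm_num at E1; linarith
      · rw [zero_pow h2.ne'] at E1
        simp only [mul_zero, add_zero, one_mul] at E1 Eh
        subst E1
        simp only [one_mul] at Eh
        obtain ⟨u, v⟩ := half_pow a1 b2 h1 h2 Eh
        omega
    · exfalso
      rw [zero_pow h3.ne'] at E0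
      norm_num at E0

lemma aux_s11 (a1 b1 a2 b2 : ℕ) (c1 c2 : ℝ) (hc1 : 0 < c1) (hc2 : 0 < c2)
    (E1 : c1 * (0:ℝ)^b1 + c2 * (0:ℝ)^b2 = 1)
    (E0 : c1 * (0:ℝ)^a1 + c2 * (0:ℝ)^a2 = 1)
    (Eh : c1 * (1/2:ℝ)^(a1+b1) + c2 * (1/2:ℝ)^(a2+b2) = 1) :
    a1 + b1 ≤ 1 ∧ a2 + b2 ≤ 1 := by
  rcases Nat.eq_zero_or_pos b1 with h1 | h1
  · subst h1
    simp only [pow_zero, mul_one, Nat.add_zero] at E1 Eh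
    exact ⟨(aux1 a1 a2 b2 c1 c2 hc1 hc2 E1 E0 Eh).1,
           (aux1 a1 a2 b2 c1 c2 hc1 hc2 E1 E0 Eh).2⟩
  · rcases Nat.eq_zero_or_pos b2 with h2 | h2
    · subst h2
      simp only [pow_zero, mul_one, Nat.add_zero] at E1 Eh
      rw [add_comm] at E1 E0 Eh
      exact (aux1 a2 a1 b1 c2 c1 hc2 hc1 E1 E0 Eh).symm
    · exfalso
      rw [zero_pow h1.ne', zero_pow h2.ne'] at E1
      norm_num at E1

theorem stmt_11 (p : MvPolynomial (Fin 2) ℝ)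
    (hpos : ∀ m, 0 ≤ p.coeff m)
    (hline : ∀ x y : ℝ, x + y = 1 → eval ![x, y] p = 1)
    (hN : p.support.card ≤ 2) :
    p.totalDegree ≤ 1 := by
  have key : ∀ x y : ℝ, x + y = 1 →
      ∑ m ∈ p.support, p.coeff m * (x ^ m 0 * y ^ m 1) = 1 := by
    intro x y h
    have := hline x y h
    rw [eval_eq'] at this
    simpa [Fin.prod_univ_two] using this
  have E1 := key 1 0 (by norm_num)
  have E0 := key 0 1 (by norm_num)
  have Eh := key (1/2) (1/2) (by norm_num)
  simp only [one_pow, one_mul, mul_one] at E1 E0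
  have deg : ∀ m ∈ p.support, m 0 + m 1 ≤ 1 := by
    obtain h0 | h1 | h2 : p.support.card = 0 ∨ p.support.card = 1 ∨ p.support.card = 2 := by
      omega
    · exfalso
      rw [Finset.card_eq_zero] at h0
      rw [h0, Finset.sum_empty] at E1
      norm_num at E1
    · obtain ⟨m, hm⟩ := Finset.card_eq_one.mp h1
      rw [hm, Finset.sum_singleton] at E1 E0
      intro n hn
      rw [hm, Finset.mem_singleton] at hn
      subst hn
      rcases Nat.eq_zero_or_pos (n 1) with hb | hb
      · rcases Nat.eq_zero_or_pos (n 0) with ha | ha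
        · omega
        · rw [zero_pow ha.ne'] at E0; norm_num at E0
      · rw [zero_pow hb.ne'] at E1; norm_num at E1
    · obtain ⟨m1, m2, hne, hs⟩ := Finset.card_eq_two.mp h2
      rw [hs, Finset.sum_pair hne] at E1 E0 Eh
      have hc1 : 0 < p.coeff m1 := by
        have : m1 ∈ p.support := by rw [hs]; simp
        exact lt_of_le_of_ne (hpos m1) (Ne.symm (mem_support_iff.mp this))
      have hc2 : 0 < p.coeff m2 := by
        have : m2 ∈ p.support := by rw [hs]; simp
        exact lt_of_le_of_ne (hpos m2) (Ne.symm (mem_support_iff.mp this))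
      have Eh' : p.coeff m1 * (1/2:ℝ)^(m1 0 + m1 1) +
          p.coeff m2 * (1/2:ℝ)^(m2 0 + m2 1) = 1 := by
        rw [pow_add, pow_add]; linarith [Eh]
      have := aux_s11 (m1 0) (m1 1) (m2 0) (m2 1) _ _ hc1 hc2 E1 E0 Eh'
      intro n hn
      rw [hs, Finset.mem_insert, Finset.mem_singleton] at hn
      rcases hn with rfl | rfl
      · exact this.1
      · exact this.2
  rw [totalDegree]
  apply Finset.sup_le
  intro m hm
  have : m.sum (fun _ e => e) = m 0 + m 1 := by
    rw [Finsupp.sum_fintype _ _ (fun _ => rfl), Fin.sum_univ_two]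
  rw [this]
  exact deg m hm
end
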